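/- arXiv:2311.17855 — 3 statements merged into one kernel-verified Lean document; each statement's English description precedes it below -/
import Mathlib

section
/- Let P, P̂ ∈ ℝ^{S×S} be row-stochastic matrices such that for every x the support of the row P(x,·) is contained in the support of P̂(x,·), let γ ∈ [0,1) and r ∈ ℝ^S, and set V := (I − γP)⁻¹ r and V̂ := (I − γP̂)⁻¹ r. Then ‖V − V̂‖∞ ≤ (γ/(1−γ))·‖(P − P̂)V‖∞ ≤ (γ√2/(1−γ)) · (max_{x∈S} √(KL(P(x,·)‖P̂(x,·)))) · ‖V‖∞. -/
open Finset Matrix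

/-- Supremum norm of a vector indexed by a finite type. -/
noncomputable def supNorm {S : Type*} [Fintype S] (v : S → ℝ) : ℝ := ⨆ x, |v x|

/-- KL divergence of finitely supported probability vectors,
with the convention `0 * log 0 = 0` (automatic since `Real.log 0 = 0`). -/
noncomputable def KLfin {S : Type*} [Fintype S] (p q : S → ℝ) : ℝ :=
  ∑ y, p y * Real.log (p y / q y)

/-!
The first inequality is a resolvent identity: subtracting the Bellman equations
`V = r + γ P V` and `V̂ = r + γ P̂ V̂` gives `V - V̂ = γ (P̂ (V - V̂) + (P - P̂) V)`, and `P̂`,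
being stochastic, does not increase the sup norm, so `‖V - V̂‖ ≤ γ ‖V - V̂‖ + γ ‖(P - P̂) V‖`.
The second is Pinsker's inequality `‖p - q‖₁ ≤ √(2 KL(p‖q))` applied row by row; it follows
by Cauchy–Schwarz from the pointwise bound `3 (x - 1)² ≤ (2x + 4) (x log x - x + 1)`.
-/

open Real InformationTheory

section SupNorm

variable {S : Type*} [Fintype S]

lemma abs_le_supNorm (v : S → ℝ) (x : S) : |v x| ≤ supNorm v :=
  le_ciSup (f := fun x => |v x|) (Set.finite_range _).bddAbove x

lemma supNorm_nonneg (v : S → ℝ) : 0 ≤ supNorm v :=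
  Real.iSup_nonneg fun x => abs_nonneg (v x)

lemma supNorm_le {v : S → ℝ} {c : ℝ} (hc : 0 ≤ c) (h : ∀ x, |v x| ≤ c) : supNorm v ≤ c :=
  Real.iSup_le h hc

lemma supNorm_zero : supNorm (0 : S → ℝ) = 0 := by
  simp [supNorm]

lemma abs_mulVec_apply_le {m : Type*} (A : Matrix m S ℝ) (v : S → ℝ) (x : m) :
    |(A *ᵥ v) x| ≤ (∑ y, |A x y|) * supNorm v :=
  calc |(A *ᵥ v) x| = |∑ y, A x y * v y| := rfl
    _ ≤ ∑ y, |A x y| * |v y| := by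
      simpa only [abs_mul] using abs_sum_le_sum_abs (fun y => A x y * v y) univ
    _ ≤ ∑ y, |A x y| * supNorm v := by gcongr with y; exact abs_le_supNorm v y
    _ = (∑ y, |A x y|) * supNorm v := (sum_mul _ _ _).symm

end SupNorm

section Stochastic

variable {S : Type*} [Fintype S] [DecidableEq S]

lemma abs_mulVec_apply_le_supNorm_of_mem_rowStochastic {M : Matrix S S ℝ}
    (hM : M ∈ rowStochastic ℝ S) (v : S → ℝ) (x : S) : |(M *ᵥ v) x| ≤ supNorm v := by
  have hrow : ∑ y, |M x y| = 1 := by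
    rw [← sum_row_of_mem_rowStochastic hM x]
    exact sum_congr rfl fun y _ => abs_of_nonneg (nonneg_of_mem_rowStochastic hM)
  simpa [hrow] using abs_mulVec_apply_le M v x

lemma supNorm_le_of_eq_smul_mulVec_add {M : Matrix S S ℝ} (hM : M ∈ rowStochastic ℝ S)
    {γ : ℝ} (hγ0 : 0 ≤ γ) (hγ1 : γ < 1) {u w : S → ℝ} (h : u = γ • (M *ᵥ u + w)) :
    supNorm u ≤ γ / (1 - γ) * supNorm w := by
  have hu0 := supNorm_nonneg u
  have hw0 := supNorm_nonneg w
  have hu : supNorm u ≤ γ * (supNorm u + supNorm w) := by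
    refine supNorm_le (by positivity) fun x => ?_
    calc |u x| = |(γ • (M *ᵥ u + w)) x| := by rw [← h]
      _ = γ * |(M *ᵥ u) x + w x| := by simp [abs_mul, abs_of_nonneg hγ0]
      _ ≤ γ * (supNorm u + supNorm w) := by
        gcongr
        exact (abs_add_le _ _).trans <| add_le_add
          (abs_mulVec_apply_le_supNorm_of_mem_rowStochastic hM u x) (abs_le_supNorm w x)
  rw [div_mul_eq_mul_div, le_div_iff₀ (by linarith)]
  linarith

lemma isUnit_det_one_sub_smul_of_mem_rowStochastic {M : Matrix S S ℝ}
    (hM : M ∈ rowStochastic ℝ S) {γ : ℝ} (hγ0 : 0 ≤ γ) (hγ1 : γ < 1) :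
    IsUnit (1 - γ • M).det := by
  rw [isUnit_iff_ne_zero]
  intro hdet
  obtain ⟨v, hv, hMv⟩ := exists_mulVec_eq_zero_iff.2 hdet
  have hfix : v = γ • (M *ᵥ v + 0) := by
    rw [add_zero]
    rwa [sub_mulVec, one_mulVec, smul_mulVec, sub_eq_zero] at hMv
  have hv0 : supNorm v ≤ 0 := by
    simpa [supNorm_zero] using supNorm_le_of_eq_smul_mulVec_add hM hγ0 hγ1 hfix
  exact hv (funext fun x => abs_nonpos_iff.1 ((abs_le_supNorm v x).trans hv0))

lemma eq_add_smul_mulVec_of_eq_inv_mulVec {R : Type*} [CommRing R] {M : Matrix S S R} {γ : R}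
    (hM : IsUnit (1 - γ • M).det) {r V : S → R} (hV : V = (1 - γ • M)⁻¹ *ᵥ r) :
    V = r + γ • (M *ᵥ V) := by
  have hAV : (1 - γ • M) *ᵥ V = r := by
    rw [hV, mulVec_mulVec, mul_nonsing_inv _ hM, one_mulVec]
  rw [sub_mulVec, one_mulVec, smul_mulVec] at hAV
  rw [← hAV, sub_add_cancel]

theorem supNorm_sub_le_of_eq_inv_mulVec {P Q : Matrix S S ℝ} (hP : P ∈ rowStochastic ℝ S)
    (hQ : Q ∈ rowStochastic ℝ S) {γ : ℝ} (hγ0 : 0 ≤ γ) (hγ1 : γ < 1) {r V W : S → ℝ}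
    (hV : V = (1 - γ • P)⁻¹ *ᵥ r) (hW : W = (1 - γ • Q)⁻¹ *ᵥ r) :
    supNorm (V - W) ≤ γ / (1 - γ) * supNorm ((P - Q) *ᵥ V) := by
  have hV' := eq_add_smul_mulVec_of_eq_inv_mulVec
    (isUnit_det_one_sub_smul_of_mem_rowStochastic hP hγ0 hγ1) hV
  have hW' := eq_add_smul_mulVec_of_eq_inv_mulVec
    (isUnit_det_one_sub_smul_of_mem_rowStochastic hQ hγ0 hγ1) hW
  refine supNorm_le_of_eq_smul_mulVec_add hQ hγ0 hγ1 ?_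
  calc V - W = (r + γ • (P *ᵥ V)) - (r + γ • (Q *ᵥ W)) := by rw [← hV', ← hW']
    _ = γ • (Q *ᵥ (V - W) + (P - Q) *ᵥ V) := by
      rw [mulVec_sub, sub_mulVec]
      module

end Stochastic

section Pinsker

lemma monotoneOn_add_one_mul_log_sub :
    MonotoneOn (fun x => (x + 1) * log x - 2 * (x - 1)) (Set.Ioi 0) := by
  have hderiv : ∀ x : ℝ, 0 < x →
      HasDerivAt (fun x => (x + 1) * log x - 2 * (x - 1)) (log x + x⁻¹ - 1) x := by
    intro x hx
    have h := (((hasDerivAt_id x).add_const 1).mul (hasDerivAt_log hx.ne')).sub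
      (((hasDerivAt_id x).sub_const 1).const_mul 2)
    refine h.congr_deriv ?_
    simp only [id]
    field_simp
    ring
  refine monotoneOn_of_hasDerivWithinAt_nonneg (convex_Ioi 0)
    (fun x hx => (hderiv x hx).continuousAt.continuousWithinAt)
    (fun x hx => (hderiv x (interior_subset hx)).hasDerivWithinAt) fun x hx => ?_
  linarith [one_sub_inv_le_log_of_pos (interior_subset hx : (0 : ℝ) < x)]

lemma three_mul_sub_one_sq_le_mul_klFun {x : ℝ} (hx : 0 ≤ x) :
    3 * (x - 1) ^ 2 ≤ (2 * x + 4) * klFun x := by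
  rcases hx.eq_or_lt with rfl | hx
  · norm_num [klFun_zero]
  set F := fun x => (2 * x + 4) * klFun x - 3 * (x - 1) ^ 2
  have hderiv : ∀ t : ℝ, 0 < t → HasDerivAt F (4 * ((t + 1) * log t - 2 * (t - 1))) t := by
    intro t ht
    have h := ((((hasDerivAt_id t).const_mul 2).add_const 4).mul (hasDerivAt_klFun ht.ne')).sub
      ((((hasDerivAt_id t).sub_const 1).pow 2).const_mul 3)
    refine h.congr_deriv ?_
    simp only [id, klFun_apply]
    push_cast
    ring
  -- `F' = 4 G` with `G` increasing and `G 1 = 0`, so `F` decreases on `(0, 1]` and increases after.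
  have hmin : IsMinOn F (Set.Ioi 0) 1 := by
    refine isMinOn_Ioi_of_deriv (hderiv 1 one_pos).continuousAt
      (fun t ht => (hderiv t ht.1).differentiableAt.differentiableWithinAt)
      (fun t ht => (hderiv t (one_pos.trans ht)).differentiableAt.differentiableWithinAt)
      (fun t ht => ?_) (fun t ht => ?_)
    · have hG := monotoneOn_add_one_mul_log_sub ht.1 (Set.mem_Ioi.2 one_pos) ht.2.le
      norm_num at hG
      rw [(hderiv t ht.1).deriv]
      linarith
    · have ht0 : 0 < t := one_pos.trans ht
      have hG := monotoneOn_add_one_mul_log_sub (Set.mem_Ioi.2 one_pos) ht0 ht.le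
      norm_num at hG
      rw [(hderiv t ht0).deriv]
      linarith
  have hF := hmin (Set.mem_Ioi.2 hx)
  norm_num [F, klFun_one] at hF
  linarith

lemma three_mul_sub_sq_le_mul_mul_klFun {p q : ℝ} (hp : 0 ≤ p) (hq : 0 ≤ q) (hpq : q = 0 → p = 0) :
    3 * (p - q) ^ 2 ≤ (2 * p + 4 * q) * (q * klFun (p / q)) := by
  rcases hq.eq_or_lt with rfl | hq
  · simp [hpq rfl]
  calc 3 * (p - q) ^ 2 = q ^ 2 * (3 * (p / q - 1) ^ 2) := by field_simp
    _ ≤ q ^ 2 * ((2 * (p / q) + 4) * klFun (p / q)) :=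
      mul_le_mul_of_nonneg_left (three_mul_sub_one_sq_le_mul_klFun (div_nonneg hp hq.le))
        (sq_nonneg q)
    _ = (2 * p + 4 * q) * (q * klFun (p / q)) := by field_simp

variable {S : Type*} [Fintype S]

lemma KLfin_eq_sum_mul_klFun {p q : S → ℝ} (hp1 : ∑ y, p y = 1) (hq1 : ∑ y, q y = 1)
    (hpq : ∀ y, q y = 0 → p y = 0) : KLfin p q = ∑ y, q y * klFun (p y / q y) := by
  have hterm : ∀ y, q y * klFun (p y / q y) = p y * log (p y / q y) + (q y - p y) := by
    intro y
    by_cases hq : q y = 0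
    · simp [hq, hpq y hq]
    · rw [klFun_apply]
      field_simp
      ring
  rw [sum_congr rfl fun y _ => hterm y, sum_add_distrib, sum_sub_distrib, hp1, hq1, sub_self,
    add_zero, KLfin]

theorem sum_abs_sub_le_sqrt_two_mul_KLfin {p q : S → ℝ} (hp0 : ∀ y, 0 ≤ p y)
    (hq0 : ∀ y, 0 ≤ q y) (hp1 : ∑ y, p y = 1) (hq1 : ∑ y, q y = 1)
    (hpq : ∀ y, q y = 0 → p y = 0) : ∑ y, |p y - q y| ≤ √(2 * KLfin p q) := by
  have hD0 : ∀ y, 0 ≤ q y * klFun (p y / q y) :=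
    fun y => mul_nonneg (hq0 y) (klFun_nonneg (div_nonneg (hp0 y) (hq0 y)))
  have hCS : (∑ y, |p y - q y|) ^ 2 ≤
      (∑ y, (2 * p y + 4 * q y)) * ∑ y, q y * klFun (p y / q y) / 3 := by
    refine sum_sq_le_sum_mul_sum_of_sq_le_mul _ (fun y _ => by linarith [hp0 y, hq0 y])
      (fun y _ => by linarith [hD0 y]) fun y _ => ?_
    rw [sq_abs, ← mul_div_assoc, le_div_iff₀ three_pos]
    linarith [three_mul_sub_sq_le_mul_mul_klFun (hp0 y) (hq0 y) (hpq y)]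
  have hw : ∑ y, (2 * p y + 4 * q y) = 6 := by
    rw [sum_add_distrib, ← mul_sum, ← mul_sum, hp1, hq1]
    norm_num
  rw [hw, ← sum_div, ← KLfin_eq_sum_mul_klFun hp1 hq1 hpq] at hCS
  rw [le_sqrt (sum_nonneg fun y _ => abs_nonneg _) (by linarith [sq_nonneg (∑ y, |p y - q y|)])]
  linarith

end Pinsker

theorem supNorm_sub_mulVec_le_sqrt_two_mul_iSup_sqrt_KLfin {S : Type*} [Fintype S]
    [DecidableEq S] {P Q : Matrix S S ℝ} (hP : P ∈ rowStochastic ℝ S)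
    (hQ : Q ∈ rowStochastic ℝ S) (hPQ : ∀ x y, Q x y = 0 → P x y = 0) (v : S → ℝ) :
    supNorm ((P - Q) *ᵥ v) ≤
      √2 * (⨆ x, √(KLfin (fun y => P x y) (fun y => Q x y))) * supNorm v := by
  set K := ⨆ x, √(KLfin (fun y => P x y) (fun y => Q x y))
  have hK : ∀ x, √(KLfin (fun y => P x y) (fun y => Q x y)) ≤ K :=
    le_ciSup (Set.finite_range _).bddAbove
  have hK0 : 0 ≤ K := Real.iSup_nonneg fun x => sqrt_nonneg _
  have hv0 := supNorm_nonneg v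
  refine supNorm_le (by positivity) fun x => ?_
  have hP' := mem_rowStochastic_iff_sum.1 hP
  have hQ' := mem_rowStochastic_iff_sum.1 hQ
  calc |((P - Q) *ᵥ v) x| ≤ (∑ y, |P x y - Q x y|) * supNorm v := abs_mulVec_apply_le _ v x
    _ ≤ √(2 * KLfin (fun y => P x y) (fun y => Q x y)) * supNorm v := by
      gcongr
      exact sum_abs_sub_le_sqrt_two_mul_KLfin (hP'.1 x) (hQ'.1 x) (hP'.2 x) (hQ'.2 x) (hPQ x)
    _ = √2 * √(KLfin (fun y => P x y) (fun y => Q x y)) * supNorm v := by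
      rw [sqrt_mul zero_le_two]
    _ ≤ √2 * K * supNorm v := by gcongr; exact hK x

theorem stmt2_general {S : Type*} [Fintype S] [DecidableEq S]
    (P Phat : Matrix S S ℝ) (γ : ℝ)
    (hP0 : ∀ x y, 0 ≤ P x y) (hP1 : ∀ x, ∑ y, P x y = 1)
    (hPhat0 : ∀ x y, 0 ≤ Phat x y) (hPhat1 : ∀ x, ∑ y, Phat x y = 1)
    (hsupp : ∀ x y, Phat x y = 0 → P x y = 0)
    (hγ0 : 0 ≤ γ) (hγ1 : γ < 1)
    (r V Vhat : S → ℝ)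
    (hV : V = ((1 : Matrix S S ℝ) - γ • P)⁻¹.mulVec r)
    (hVhat : Vhat = ((1 : Matrix S S ℝ) - γ • Phat)⁻¹.mulVec r) :
    supNorm (fun x => V x - Vhat x) ≤ (γ / (1 - γ)) * supNorm ((P - Phat).mulVec V) ∧
      (γ / (1 - γ)) * supNorm ((P - Phat).mulVec V) ≤
        (γ * Real.sqrt 2 / (1 - γ)) *
          (⨆ x, Real.sqrt (KLfin (fun y => P x y) (fun y => Phat x y))) * supNorm V := by
  have hP : P ∈ rowStochastic ℝ S := mem_rowStochastic_iff_sum.2 ⟨hP0, hP1⟩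
  have hPhat : Phat ∈ rowStochastic ℝ S := mem_rowStochastic_iff_sum.2 ⟨hPhat0, hPhat1⟩
  have hγ : 0 ≤ γ / (1 - γ) := div_nonneg hγ0 (by linarith)
  refine ⟨supNorm_sub_le_of_eq_inv_mulVec hP hPhat hγ0 hγ1 hV hVhat, ?_⟩
  calc γ / (1 - γ) * supNorm ((P - Phat) *ᵥ V)
      ≤ γ / (1 - γ) * (√2 * (⨆ x, √(KLfin (fun y => P x y) (fun y => Phat x y))) * supNorm V) :=
        mul_le_mul_of_nonneg_left
          (supNorm_sub_mulVec_le_sqrt_two_mul_iSup_sqrt_KLfin hP hPhat hsupp V) hγ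
    _ = γ * √2 / (1 - γ) * (⨆ x, √(KLfin (fun y => P x y) (fun y => Phat x y))) * supNorm V := by
      ring

theorem stmt2 {S : Type*} [Fintype S] [Nonempty S] [DecidableEq S]
    (P Phat : Matrix S S ℝ) (γ : ℝ)
    (hP0 : ∀ x y, 0 ≤ P x y) (hP1 : ∀ x, ∑ y, P x y = 1)
    (hPhat0 : ∀ x y, 0 ≤ Phat x y) (hPhat1 : ∀ x, ∑ y, Phat x y = 1)
    (hsupp : ∀ x y, Phat x y = 0 → P x y = 0)
    (hγ0 : 0 ≤ γ) (hγ1 : γ < 1)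
    (r V Vhat : S → ℝ)
    (hV : V = ((1 : Matrix S S ℝ) - γ • P)⁻¹.mulVec r)
    (hVhat : Vhat = ((1 : Matrix S S ℝ) - γ • Phat)⁻¹.mulVec r) :
    supNorm (fun x => V x - Vhat x) ≤ (γ / (1 - γ)) * supNorm ((P - Phat).mulVec V) ∧
      (γ / (1 - γ)) * supNorm ((P - Phat).mulVec V) ≤
        (γ * Real.sqrt 2 / (1 - γ)) *
          (⨆ x, Real.sqrt (KLfin (fun y => P x y) (fun y => Phat x y))) * supNorm V :=
  stmt2_general P Phat γ hP0 hP1 hPhat0 hPhat1 hsupp hγ0 hγ1 r V Vhat hV hVhat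
end

section
/- Let P and P̂ be transition kernels on S×A such that for every (x,a) the support of P(·|x,a) is contained in the support of P̂(·|x,a), let r : S×A → ℝ and γ ∈ [0,1). Set c₁ := γ√2/(1−γ) and ε := max_{(x,a)} √(KL(P(·|x,a)‖P̂(·|x,a))), and assume c₁·ε < 1. Let π* be an optimal deterministic policy for (r,P) and π̂* an optimal deterministic policy for (r,P̂). Then ‖V^{π*}(r,P) − V^{π̂*}(r,P)‖∞ ≤ (2c₁ε/(1 − c₁ε)) · ‖V^{π*}(r,P)‖∞. -/
open Finset Matrix

/-- The row-stochastic matrix `P^μ` induced by a deterministic policy `μ`. -/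
noncomputable def polMat {S A : Type*} (P : S → A → S → ℝ) (μ : S → A) : Matrix S S ℝ :=
  Matrix.of fun x y => P x (μ x) y

/-- The value function `V^μ(r,P) = (I - γ P^μ)⁻¹ r^μ` of a deterministic policy `μ`. -/
noncomputable def polVal {S A : Type*} [Fintype S] [DecidableEq S]
    (γ : ℝ) (r : S → A → ℝ) (P : S → A → S → ℝ) (μ : S → A) : S → ℝ :=
  ((1 : Matrix S S ℝ) - γ • polMat P μ)⁻¹.mulVec (fun x => r x (μ x))

/-!
Pinsker's inequality turns the bound on the KL divergences into the bound `√2 ε` on the `ℓ¹`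
distance between corresponding rows of `P` and `P̂`. For a fixed policy `μ`, subtracting the two
Bellman equations gives `V - V̂ = γ (P^μ - P̂^μ) V + γ P̂^μ (V - V̂)`, hence the simulation bound
`‖V^μ(r,P) - V^μ(r,P̂)‖ ≤ c₁ ε ‖V^μ(r,P)‖`. Optimality of `π*` for `P` and of `π̂*` for `P̂` gives
`0 ≤ V^{π*} - V^{π̂*} ≤ (V^{π*} - V̂^{π*}) + (V̂^{π̂*} - V^{π̂*})`, and the triangle inequality
`‖V^{π̂*}‖ ≤ ‖V^{π*}‖ + ‖V^{π*} - V^{π̂*}‖` closes the resulting self-referential bound.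

Pinsker's inequality itself follows from `3 (t - 1)² / (2 (t + 2)) ≤ t log t - t + 1` and
Cauchy–Schwarz with weights `2 (p + 2 q) / 3`, which sum to `2`.
-/

open Real InformationTheory

lemma hasDerivAt_klFun_sub {t : ℝ} (ht : 0 < t) :
    HasDerivAt (fun t => klFun t - 3 * (t - 1) ^ 2 / (2 * (t + 2)))
      (log t - 3 * (t - 1) * (t + 5) / (2 * (t + 2) ^ 2)) t := by
  have := (hasDerivAt_klFun ht.ne').sub
    ((((hasDerivAt_id' t).sub_const 1).pow 2).const_mul 3 |>.div
      (((hasDerivAt_id' t).add_const 2).const_mul 2) (by positivity))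
  refine this.congr_deriv ?_
  simp only [Pi.pow_apply]
  field_simp
  ring

lemma convexOn_klFun_sub :
    ConvexOn ℝ (Set.Ici 0) fun t => klFun t - 3 * (t - 1) ^ 2 / (2 * (t + 2)) := by
  refine convexOn_of_hasDerivWithinAt2_nonneg (convex_Ici 0)
    (f' := fun t => log t - 3 * (t - 1) * (t + 5) / (2 * (t + 2) ^ 2))
    (f'' := fun t => 1 / t - 27 / (t + 2) ^ 3) ?_ ?_ ?_ ?_
  · refine continuous_klFun.continuousOn.sub (ContinuousOn.div (by fun_prop) (by fun_prop) ?_)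
    intro t (ht : 0 ≤ t)
    positivity
  all_goals rw [interior_Ici]; intro t (ht : 0 < t)
  · exact (hasDerivAt_klFun_sub ht).hasDerivWithinAt
  · have := (hasDerivAt_log ht.ne').sub
      ((((hasDerivAt_id' t).sub_const 1).const_mul 3).mul ((hasDerivAt_id' t).add_const 5) |>.div
        ((((hasDerivAt_id' t).add_const 2).pow 2).const_mul 2)
          (by simp only [Pi.pow_apply]; positivity))
    refine (this.congr_deriv ?_).hasDerivWithinAt
    simp only [Pi.pow_apply, Pi.mul_apply]
    field_simp
    ring
  · -- `(t + 2)³ ≥ 27 t` is AM-GM for `t, 1, 1`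
    rw [sub_nonneg, div_le_div_iff₀ (by positivity) ht]
    nlinarith [sq_nonneg (t - 1), mul_nonneg ht.le (sq_nonneg (t - 1))]

lemma three_mul_sq_div_le_klFun {t : ℝ} (ht : 0 ≤ t) :
    3 * (t - 1) ^ 2 / (2 * (t + 2)) ≤ klFun t := by
  have hderiv := (hasDerivAt_klFun_sub one_pos).hasDerivWithinAt.derivWithin
    (uniqueDiffWithinAt_Ioi (1 : ℝ))
  norm_num at hderiv
  simpa [klFun_one] using convexOn_klFun_sub.isMinOn_of_rightDeriv_eq_zero (by simp) hderiv ht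

lemma sub_add_three_mul_sq_div_le_mul_log_div {p q : ℝ} (hp : 0 ≤ p) (hq : 0 ≤ q)
    (hpq : q = 0 → p = 0) : p - q + 3 * (p - q) ^ 2 / (2 * (p + 2 * q)) ≤ p * log (p / q) := by
  rcases hq.eq_or_lt with rfl | hq
  · simp [hpq rfl]
  have h := mul_le_mul_of_nonneg_left (three_mul_sq_div_le_klFun (div_nonneg hp hq.le)) hq.le
  have hlhs : q * (3 * (p / q - 1) ^ 2 / (2 * (p / q + 2))) =
      3 * (p - q) ^ 2 / (2 * (p + 2 * q)) := by
    field_simp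
  have hrhs : q * klFun (p / q) = p * log (p / q) + q - p := by
    rw [klFun_apply]
    field_simp
  linarith

theorem sum_abs_sub_le_sqrt_two_mul_sqrt_KLfin {S : Type*} [Fintype S] {p q : S → ℝ}
    (hp0 : ∀ y, 0 ≤ p y) (hq0 : ∀ y, 0 ≤ q y) (hp1 : ∑ y, p y = 1) (hq1 : ∑ y, q y = 1)
    (hpq : ∀ y, q y = 0 → p y = 0) :
    ∑ y, |p y - q y| ≤ √2 * √(KLfin p q) := by
  set f : S → ℝ := fun y => 3 * (p y - q y) ^ 2 / (2 * (p y + 2 * q y))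
  set g : S → ℝ := fun y => 2 * (p y + 2 * q y) / 3
  have hf : ∑ y, f y ≤ KLfin p q :=
    calc ∑ y, f y = ∑ y, (p y - q y + f y) := by
          rw [sum_add_distrib, sum_sub_distrib, hp1, hq1, sub_self, zero_add]
      _ ≤ KLfin p q :=
          sum_le_sum fun y _ => sub_add_three_mul_sq_div_le_mul_log_div (hp0 y) (hq0 y) (hpq y)
  have hg : ∑ y, g y = 2 := by
    simp only [g, ← sum_div, ← mul_sum, sum_add_distrib, hp1, hq1]
    norm_num
  have hfg : ∀ y ∈ Finset.univ, |p y - q y| ^ 2 ≤ f y * g y := by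
    intro y _
    have hpy0 := hp0 y
    have hqy0 := hq0 y
    rcases (by positivity : 0 ≤ p y + 2 * q y).eq_or_lt with h | h
    · have hpy : p y = 0 := by linarith
      have hqy : q y = 0 := by linarith
      simp [f, g, hpy, hqy]
    · rw [sq_abs]
      refine le_of_eq ?_
      simp only [f, g]
      field_simp
      rw [mul_div_cancel_right₀ _ (by linarith)]
  have hcs := sum_sq_le_sum_mul_sum_of_sq_le_mul univ
    (fun y _ => div_nonneg (by positivity) (by linarith [hp0 y, hq0 y]))
    (fun y _ => by have := hp0 y; have := hq0 y; positivity) hfg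
  rw [hg] at hcs
  rw [← sqrt_mul zero_le_two]
  exact le_sqrt_of_sq_le (by linarith)

lemma supNorm_eq_norm {S : Type*} [Fintype S] (v : S → ℝ) : supNorm v = ‖v‖ := by
  refine le_antisymm (Real.iSup_le (fun x => norm_le_pi_norm v x) (norm_nonneg v)) ?_
  refine (pi_norm_le_iff_of_nonneg (Real.iSup_nonneg fun x => abs_nonneg (v x))).2 fun x => ?_
  exact le_ciSup (f := fun x => |v x|) (Set.finite_range _).bddAbove x

lemma norm_sub_le_norm_sub_add_norm_sub_of_le {S : Type*} [Fintype S] {a b a' b' : S → ℝ}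
    (hab : b ≤ a) (ha'b' : a' ≤ b') : ‖a - b‖ ≤ ‖a - a'‖ + ‖b - b'‖ := by
  refine (pi_norm_le_iff_of_nonneg (by positivity)).2 fun x => ?_
  rw [Pi.sub_apply, Real.norm_of_nonneg (sub_nonneg.2 (hab x))]
  have h1 := (le_abs_self _).trans (norm_le_pi_norm (a - a') x)
  have h2 := (neg_le_abs _).trans (norm_le_pi_norm (b - b') x)
  simp only [Pi.sub_apply, neg_sub] at h1 h2 ⊢
  linarith [ha'b' x]

namespace Matrix

variable {m n : Type*} [Fintype m] [Fintype n]

lemma norm_mulVec_le_of_sum_abs_le (M : Matrix m n ℝ) {c : ℝ} (hc : 0 ≤ c)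
    (hM : ∀ x, ∑ y, |M x y| ≤ c) (v : n → ℝ) : ‖M *ᵥ v‖ ≤ c * ‖v‖ := by
  refine (pi_norm_le_iff_of_nonneg (by positivity)).2 fun x => ?_
  calc ‖(M *ᵥ v) x‖ ≤ ∑ y, |M x y| * ‖v‖ := by
        refine (abs_sum_le_sum_abs _ _).trans (sum_le_sum fun y _ => ?_)
        rw [abs_mul]
        exact mul_le_mul_of_nonneg_left (norm_le_pi_norm v y) (abs_nonneg _)
    _ = (∑ y, |M x y|) * ‖v‖ := (sum_mul ..).symm
    _ ≤ c * ‖v‖ := mul_le_mul_of_nonneg_right (hM x) (norm_nonneg v)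

lemma isUnit_one_sub_smul [DecidableEq n] {M : Matrix n n ℝ} (hM : ∀ x, ∑ y, |M x y| ≤ 1)
    {γ : ℝ} (hγ : |γ| < 1) : IsUnit (1 - γ • M) := by
  rw [← mulVec_injective_iff_isUnit]
  refine (injective_iff_map_eq_zero (mulVecLin (1 - γ • M))).2 fun v hv => ?_
  have hfix : v = γ • M *ᵥ v := by
    simpa [sub_mulVec, sub_eq_zero, smul_mulVec] using hv
  have hcontr : ‖v‖ ≤ |γ| * ‖v‖ :=
    calc ‖v‖ = |γ| * ‖M *ᵥ v‖ := by conv_lhs => rw [hfix, norm_smul, Real.norm_eq_abs]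
      _ ≤ |γ| * ‖v‖ := by
        gcongr
        simpa using M.norm_mulVec_le_of_sum_abs_le zero_le_one hM v
  exact norm_le_zero_iff.1 (by nlinarith [norm_nonneg v])

end Matrix

section Policy

variable {S A : Type*} [Fintype S] [DecidableEq S] {γ : ℝ} (r : S → A → ℝ) (μ : S → A)

lemma polVal_eq_add_smul_mulVec {P : S → A → S → ℝ} (hP : ∀ x a, ∑ y, |P x a y| ≤ 1)
    (hγ : |γ| < 1) :
    polVal γ r P μ = (fun x => r x (μ x)) + γ • (polMat P μ *ᵥ polVal γ r P μ) := by
  have hB := isUnit_one_sub_smul (M := polMat P μ) (fun x => hP x (μ x)) hγ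
  have hV : (1 - γ • polMat P μ) *ᵥ polVal γ r P μ = fun x => r x (μ x) := by
    rw [polVal, mulVec_mulVec, mul_nonsing_inv _ ((isUnit_iff_isUnit_det _).mp hB), one_mulVec]
  rw [← hV, sub_mulVec, one_mulVec, smul_mulVec, sub_add_cancel]

lemma norm_polVal_sub_polVal_le {P Q : S → A → S → ℝ} (hP : ∀ x a, ∑ y, |P x a y| ≤ 1)
    (hQ : ∀ x a, ∑ y, |Q x a y| ≤ 1) (hγ0 : 0 ≤ γ) (hγ1 : γ < 1) {δ : ℝ} (hδ0 : 0 ≤ δ)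
    (hδ : ∀ x a, ∑ y, |P x a y - Q x a y| ≤ δ) :
    ‖polVal γ r P μ - polVal γ r Q μ‖ ≤ γ * δ / (1 - γ) * ‖polVal γ r P μ‖ := by
  have hγ : |γ| < 1 := abs_lt.2 ⟨by linarith, hγ1⟩
  have hV := polVal_eq_add_smul_mulVec r μ hP hγ
  have hW := polVal_eq_add_smul_mulVec r μ hQ hγ
  set V := polVal γ r P μ
  set W := polVal γ r Q μ
  have hdiff : V - W = γ • ((polMat P μ - polMat Q μ) *ᵥ V + polMat Q μ *ᵥ (V - W)) := by
    rw [sub_mulVec, mulVec_sub]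
    linear_combination (norm := module) hV - hW
  have hrec : ‖V - W‖ ≤ γ * (δ * ‖V‖ + ‖V - W‖) := by
    conv_lhs => rw [hdiff, norm_smul, Real.norm_of_nonneg hγ0]
    gcongr
    refine (norm_add_le _ _).trans (add_le_add ?_ ?_)
    · exact norm_mulVec_le_of_sum_abs_le (polMat P μ - polMat Q μ) hδ0 (fun x => hδ x (μ x)) V
    · simpa using
        norm_mulVec_le_of_sum_abs_le (polMat Q μ) zero_le_one (fun x => hQ x (μ x)) (V - W)
  rw [div_mul_eq_mul_div, le_div_iff₀ (sub_pos.2 hγ1)]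
  nlinarith

end Policy

theorem stmt3_general {S A : Type*} [Fintype S] [DecidableEq S] [Fintype A]
    (P Phat : S → A → S → ℝ)
    (hP0 : ∀ x a y, 0 ≤ P x a y) (hP1 : ∀ x a, ∑ y, P x a y = 1)
    (hPhat0 : ∀ x a y, 0 ≤ Phat x a y) (hPhat1 : ∀ x a, ∑ y, Phat x a y = 1)
    (hsupp : ∀ x a y, Phat x a y = 0 → P x a y = 0)
    (r : S → A → ℝ) (γ : ℝ) (hγ0 : 0 ≤ γ) (hγ1 : γ < 1)
    (c₁ ε : ℝ)
    (hc₁ : c₁ = γ * Real.sqrt 2 / (1 - γ))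
    (hε : ε = ⨆ x, ⨆ a, Real.sqrt (KLfin (P x a) (Phat x a)))
    (hsmall : c₁ * ε < 1)
    (πstar πhat : S → A)
    (hopt : ∀ μ : S → A, ∀ x, polVal γ r P μ x ≤ polVal γ r P πstar x)
    (hopthat : ∀ μ : S → A, ∀ x, polVal γ r Phat μ x ≤ polVal γ r Phat πhat x) :
    supNorm (fun x => polVal γ r P πstar x - polVal γ r P πhat x) ≤
      (2 * c₁ * ε / (1 - c₁ * ε)) * supNorm (polVal γ r P πstar) := by
  have hε0 : 0 ≤ ε := hε ▸ Real.iSup_nonneg fun x => Real.iSup_nonneg fun a => sqrt_nonneg _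
  have hsqrtKL : ∀ x a, √(KLfin (P x a) (Phat x a)) ≤ ε := fun x a => hε ▸
    (le_ciSup (Set.finite_range _).bddAbove a).trans
      (le_ciSup (f := fun x => ⨆ a, √(KLfin (P x a) (Phat x a))) (Set.finite_range _).bddAbove x)
  have hrow : ∀ x a, ∑ y, |P x a y - Phat x a y| ≤ √2 * ε := fun x a =>
    (sum_abs_sub_le_sqrt_two_mul_sqrt_KLfin (hP0 x a) (hPhat0 x a) (hP1 x a) (hPhat1 x a)
      (hsupp x a)).trans (by gcongr; exact hsqrtKL x a)
  have hstoch : ∀ {Q : S → A → S → ℝ}, (∀ x a y, 0 ≤ Q x a y) → (∀ x a, ∑ y, Q x a y = 1) →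
      ∀ x a, ∑ y, |Q x a y| ≤ 1 := fun h0 h1 x a =>
    ((sum_congr rfl fun y _ => abs_of_nonneg (h0 x a y)).trans (h1 x a)).le
  have hsim : ∀ μ, ‖polVal γ r P μ - polVal γ r Phat μ‖ ≤ c₁ * ε * ‖polVal γ r P μ‖ := by
    intro μ
    convert norm_polVal_sub_polVal_le r μ (hstoch hP0 hP1) (hstoch hPhat0 hPhat1) hγ0 hγ1
      (by positivity) hrow using 2
    rw [hc₁]
    ring
  have hopt_sub := norm_sub_le_norm_sub_add_norm_sub_of_le (hopt πhat) (hopthat πstar)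
  have hnorm_hat := norm_le_norm_add_norm_sub (polVal γ r P πstar) (polVal γ r P πhat)
  have hcε : 0 ≤ c₁ * ε := mul_nonneg (hc₁ ▸ by positivity) hε0
  simp only [supNorm_eq_norm]
  change ‖polVal γ r P πstar - polVal γ r P πhat‖ ≤ _
  rw [div_mul_eq_mul_div, le_div_iff₀ (sub_pos.2 hsmall)]
  nlinarith [hsim πstar, hsim πhat, mul_le_mul_of_nonneg_left hnorm_hat hcε]

theorem stmt3 {S A : Type*} [Fintype S] [Nonempty S] [DecidableEq S] [Fintype A] [Nonempty A]
    (P Phat : S → A → S → ℝ)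
    (hP0 : ∀ x a y, 0 ≤ P x a y) (hP1 : ∀ x a, ∑ y, P x a y = 1)
    (hPhat0 : ∀ x a y, 0 ≤ Phat x a y) (hPhat1 : ∀ x a, ∑ y, Phat x a y = 1)
    (hsupp : ∀ x a y, Phat x a y = 0 → P x a y = 0)
    (r : S → A → ℝ) (γ : ℝ) (hγ0 : 0 ≤ γ) (hγ1 : γ < 1)
    (c₁ ε : ℝ)
    (hc₁ : c₁ = γ * Real.sqrt 2 / (1 - γ))
    (hε : ε = ⨆ x, ⨆ a, Real.sqrt (KLfin (P x a) (Phat x a)))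
    (hsmall : c₁ * ε < 1)
    (πstar πhat : S → A)
    (hopt : ∀ μ : S → A, ∀ x, polVal γ r P μ x ≤ polVal γ r P πstar x)
    (hopthat : ∀ μ : S → A, ∀ x, polVal γ r Phat μ x ≤ polVal γ r Phat πhat x) :
    supNorm (fun x => polVal γ r P πstar x - polVal γ r P πhat x) ≤
      (2 * c₁ * ε / (1 - c₁ * ε)) * supNorm (polVal γ r P πstar) :=
  stmt3_general P Phat hP0 hP1 hPhat0 hPhat1 hsupp r γ hγ0 hγ1 c₁ ε hc₁ hε hsmall πstar πhat hopt
    hopthat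
end

section
/- Let p be a probability measure on Z absolutely continuous with respect to p̂ with density g := dp/dp̂ and KL(p‖p̂) < ∞, let β > 0 and b ∈ ℝ^d, and let λ* be a maximizer of D_{β,b} over ℝ^d. Then ∫ |g(z) − exp(⟨λ*, φ(z)⟩ − Λ_{λ*})| dp̂(z) ≤ √2·√(KL(p‖p̂)) + (2/β)·‖∫ φ dp − b‖₂. -/
/-!
Write `q` for the Gibbs tilt at `λ*`. Pinsker's inequality gives `‖p - q‖₁ ≤ √(2 KL(p‖q))`, and
`KL(p‖q) = KL(p‖p̂) - (⟨λ*, 𝔼_p φ⟩ - Λ_{λ*})`. Comparing `λ*` with `λ = 0` in the dual gives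
`⟨λ*, b⟩ - Λ_{λ*} ≥ (β²/4)‖λ*‖²`, and completing the square bounds
`⟨λ*, b - 𝔼_p φ⟩ - (β²/4)‖λ*‖²` by `‖𝔼_p φ - b‖² / β²`, so `KL(p‖q) ≤ KL(p‖p̂) + ‖𝔼_p φ - b‖² / β²`.

Pinsker's inequality itself comes from the pointwise bound
`3 (x - y)² ≤ 2 (x log (x / y) - x + y) (x + 2y)` and Cauchy–Schwarz against the weight `x + 2y`,
whose integral is `3`.
-/

open MeasureTheory

/-- Euclidean inner product on `ℝ^d`. -/
noncomputable def dotd {d : ℕ} (lam v : Fin d → ℝ) : ℝ := ∑ i, lam i * v i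

/-- The log-normalizer `Λ_λ = log ∫ exp⟨λ, φ(z)⟩ dp̂(z)`. -/
noncomputable def LamZ {Z : Type*} [MeasurableSpace Z] (phat : Measure Z)
    {d : ℕ} (φ : Z → Fin d → ℝ) (lam : Fin d → ℝ) : ℝ :=
  Real.log (∫ z, Real.exp (dotd lam (φ z)) ∂phat)

/-- Kullback–Leibler divergence `KL(p‖q) = ∫ log (dp/dq) dp`. -/
noncomputable def KLm {Z : Type*} [MeasurableSpace Z] (p q : Measure Z) : ℝ :=
  ∫ z, Real.log ((p.rnDeriv q z).toReal) ∂p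

/-- The `ℓ₂²`-regularized dual objective `D_{β,b}(λ) = ⟨λ,b⟩ − Λ_λ − (β²/4)‖λ‖₂²`. -/
noncomputable def Dreg {Z : Type*} [MeasurableSpace Z] (phat : Measure Z)
    {d : ℕ} (φ : Z → Fin d → ℝ) (β : ℝ) (b lam : Fin d → ℝ) : ℝ :=
  dotd lam b - LamZ phat φ lam - (β ^ 2 / 4) * ∑ i, (lam i) ^ 2

open Real Set

lemma nonneg_of_hasDerivAt_of_sub_one_mul_nonneg {f f' : ℝ → ℝ}
    (hf : ∀ t, 0 < t → HasDerivAt f (f' t) t) (hf' : ∀ t, 0 < t → 0 ≤ (t - 1) * f' t)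
    (h1 : f 1 = 0) {t : ℝ} (ht : 0 < t) : 0 ≤ f t := by
  have hcont : ∀ a b, 0 < a → ContinuousOn f (Icc a b) := fun a b ha x hx =>
    (hf x (ha.trans_le hx.1)).continuousAt.continuousWithinAt
  rcases le_total 1 t with h | h
  · have hmono : MonotoneOn f (Icc 1 t) := by
      refine monotoneOn_of_hasDerivWithinAt_nonneg (f' := f') (convex_Icc 1 t) (hcont 1 t one_pos)
        (fun x hx => ?_) (fun x hx => ?_) <;> rw [interior_Icc] at hx
      · exact (hf x (by linarith [hx.1])).hasDerivWithinAt
      · exact nonneg_of_mul_nonneg_right (hf' x (by linarith [hx.1])) (by linarith [hx.1])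
    simpa [h1] using hmono ⟨le_rfl, h⟩ ⟨h, le_rfl⟩ h
  · have hanti : AntitoneOn f (Icc t 1) := by
      refine antitoneOn_of_hasDerivWithinAt_nonpos (f' := f') (convex_Icc t 1) (hcont t 1 ht)
        (fun x hx => ?_) (fun x hx => ?_) <;> rw [interior_Icc] at hx
      · exact (hf x (ht.trans hx.1)).hasDerivWithinAt
      · exact nonpos_of_mul_nonneg_right (hf' x (ht.trans hx.1)) (by linarith [hx.2])
    simpa [h1] using hanti ⟨le_rfl, h⟩ ⟨h, le_rfl⟩ h

lemma monotoneOn_add_one_mul_log_sub_two_mul :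
    MonotoneOn (fun t : ℝ => (t + 1) * log t - 2 * t) (Ioi 0) := by
  have hderiv : ∀ t : ℝ, 0 < t → HasDerivAt (fun t : ℝ => (t + 1) * log t - 2 * t)
      (1 * log t + (t + 1) * t⁻¹ - 2 * 1) t := fun t ht =>
    (((hasDerivAt_id t).add_const 1).mul (hasDerivAt_log ht.ne')).sub
      ((hasDerivAt_id t).const_mul 2)
  refine monotoneOn_of_hasDerivWithinAt_nonneg (convex_Ioi 0)
    (fun x hx => (hderiv x hx).continuousAt.continuousWithinAt)
    (fun x hx => (hderiv x (interior_subset hx)).hasDerivWithinAt) (fun x hx => ?_)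
  rw [interior_Ioi] at hx
  have hx' : (x + 1) * x⁻¹ = 1 + x⁻¹ := by rw [add_mul, mul_inv_cancel₀ hx.ne', one_mul]
  linarith [one_sub_inv_le_log_of_pos hx]

lemma three_mul_sub_one_sq_le {t : ℝ} (ht : 0 < t) :
    3 * (t - 1) ^ 2 ≤ 2 * (t * log t - t + 1) * (t + 2) := by
  have hG := monotoneOn_add_one_mul_log_sub_two_mul
  have hderiv : ∀ s : ℝ, 0 < s →
      HasDerivAt (fun s => 2 * (s * log s - s + 1) * (s + 2) - 3 * (s - 1) ^ 2)
        (4 * ((s + 1) * log s - 2 * s + 2)) s := by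
    intro s hs
    have h : HasDerivAt (fun s => 2 * (s * log s - s + 1) * (s + 2) - 3 * (s - 1) ^ 2) _ s :=
      ((((((hasDerivAt_id s).mul (hasDerivAt_log hs.ne')).sub (hasDerivAt_id s)).add_const 1
      ).const_mul 2).mul ((hasDerivAt_id s).add_const 2)).sub
      ((((hasDerivAt_id s).sub_const 1).pow 2).const_mul 3)
    refine h.congr_deriv ?_
    simp only [id, Pi.mul_apply, Pi.sub_apply, Nat.cast_ofNat, mul_inv_cancel₀ hs.ne']
    ring
  -- the derivative vanishes at `1` and is increasing, so it has the sign of `s - 1`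
  have hsign : ∀ s : ℝ, 0 < s → 0 ≤ (s - 1) * (4 * ((s + 1) * log s - 2 * s + 2)) := by
    intro s hs
    rcases le_total 1 s with h | h
    · have := hG (mem_Ioi.2 one_pos) (mem_Ioi.2 hs) h
      simp only [log_one] at this
      nlinarith
    · have := hG (mem_Ioi.2 hs) (mem_Ioi.2 one_pos) h
      simp only [log_one] at this
      nlinarith
  have := nonneg_of_hasDerivAt_of_sub_one_mul_nonneg hderiv hsign (by simp) ht
  linarith

lemma three_mul_sub_sq_le {x y : ℝ} (hx : 0 ≤ x) (hy : 0 < y) :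
    3 * (x - y) ^ 2 ≤ 2 * (x * (log x - log y) - x + y) * (x + 2 * y) := by
  rcases hx.eq_or_lt with rfl | hx
  · nlinarith
  obtain ⟨t, ht, rfl⟩ : ∃ t, 0 < t ∧ x = t * y := ⟨x / y, div_pos hx hy, by field_simp⟩
  rw [log_mul ht.ne' hy.ne']
  nlinarith [mul_le_mul_of_nonneg_right (three_mul_sub_one_sq_le ht) (sq_nonneg y)]

lemma sqrt_add_le_sqrt_add_sqrt {x y : ℝ} (hy : 0 ≤ y) : √(x + y) ≤ √x + √y := by
  rcases le_total 0 x with hx | hx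
  · rw [sqrt_le_left (by positivity)]
    nlinarith [sq_sqrt hx, sq_sqrt hy, sqrt_nonneg x, sqrt_nonneg y]
  · rw [sqrt_eq_zero_of_nonpos hx, zero_add]
    exact sqrt_le_sqrt (by linarith)

lemma integral_mul_le_sqrt_mul_sqrt {Z : Type*} [MeasurableSpace Z] {μ : Measure Z}
    {a b : Z → ℝ} (ha : 0 ≤ a) (hb : 0 ≤ b)
    (ham : AEStronglyMeasurable a μ) (hbm : AEStronglyMeasurable b μ)
    (ha2 : Integrable (fun z => a z ^ 2) μ) (hb2 : Integrable (fun z => b z ^ 2) μ) :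
    ∫ z, a z * b z ∂μ ≤ √(∫ z, a z ^ 2 ∂μ) * √(∫ z, b z ^ 2 ∂μ) := by
  have h := integral_mul_le_Lp_mul_Lq_of_nonneg Real.HolderConjugate.two_two
    (ae_of_all _ ha) (ae_of_all _ hb)
    (by simpa using (memLp_two_iff_integrable_sq ham).2 ha2)
    (by simpa using (memLp_two_iff_integrable_sq hbm).2 hb2)
  simpa only [rpow_two, ← sqrt_eq_rpow] using h

theorem integral_abs_sub_le_sqrt_two_mul {Z : Type*} [MeasurableSpace Z] {μ : Measure Z}
    {g h : Z → ℝ} (hgm : Measurable g) (hhm : Measurable h) (hg0 : ∀ z, 0 ≤ g z)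
    (hh0 : ∀ z, 0 < h z) (hgi : Integrable g μ) (hhi : Integrable h μ)
    (hg1 : ∫ z, g z ∂μ = 1) (hh1 : ∫ z, h z ∂μ = 1)
    (hKi : Integrable (fun z => g z * (log (g z) - log (h z))) μ) :
    ∫ z, |g z - h z| ∂μ ≤ √(2 * ∫ z, g z * (log (g z) - log (h z)) ∂μ) := by
  set w : Z → ℝ := fun z => g z + 2 * h z
  set F : Z → ℝ := fun z => g z * (log (g z) - log (h z)) - g z + h z
  have hw : ∀ z, 0 < w z := fun z => by linarith [hg0 z, hh0 z]
  have hwm : Measurable w := hgm.add (hhm.const_mul 2)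
  have hwi : Integrable w μ := hgi.add (hhi.const_mul 2)
  have hFi : Integrable F μ := (hKi.sub hgi).add hhi
  have hpoint : ∀ z, (|g z - h z| / √(w z)) ^ 2 ≤ 2 / 3 * F z := fun z => by
    rw [div_pow, sq_abs, sq_sqrt (hw z).le, div_le_iff₀ (hw z)]
    linarith [three_mul_sub_sq_le (hg0 z) (hh0 z)]
  have ham : Measurable fun z => |g z - h z| / √(w z) := by fun_prop
  have hsq_i : Integrable (fun z => (|g z - h z| / √(w z)) ^ 2) μ :=
    (hFi.const_mul (2 / 3)).mono' (ham.pow_const 2).aestronglyMeasurable (ae_of_all _ fun z => by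
      rw [Real.norm_of_nonneg (sq_nonneg _)]; exact hpoint z)
  have hw_sq : ∀ z, √(w z) ^ 2 = w z := fun z => sq_sqrt (hw z).le
  have hcs := integral_mul_le_sqrt_mul_sqrt (μ := μ)
    (fun z => div_nonneg (abs_nonneg (g z - h z)) (sqrt_nonneg (w z)))
    (fun z => sqrt_nonneg (w z)) ham.aestronglyMeasurable hwm.sqrt.aestronglyMeasurable hsq_i
    (by simpa only [hw_sq] using hwi)
  have hF : ∫ z, F z ∂μ = ∫ z, g z * (log (g z) - log (h z)) ∂μ := by
    simp only [F]
    rw [integral_add (f := fun z => g z * (log (g z) - log (h z)) - g z) (hKi.sub hgi) hhi,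
      integral_sub hKi hgi, hg1, hh1]
    ring
  have hw3 : ∫ z, w z ∂μ = 3 := by
    rw [integral_add hgi (hhi.const_mul 2), integral_const_mul, hg1, hh1]; norm_num
  calc ∫ z, |g z - h z| ∂μ = ∫ z, |g z - h z| / √(w z) * √(w z) ∂μ := by
        congr 1 with z; exact (div_mul_cancel₀ _ (sqrt_pos.2 (hw z)).ne').symm
    _ ≤ √(∫ z, (|g z - h z| / √(w z)) ^ 2 ∂μ) * √(∫ z, √(w z) ^ 2 ∂μ) := hcs
    _ ≤ √(2 / 3 * ∫ z, F z ∂μ) * √3 := by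
        simp only [hw_sq, hw3, ← integral_const_mul]
        gcongr ?_ * _
        exact sqrt_le_sqrt (integral_mono hsq_i (hFi.const_mul _) hpoint)
    _ = √(2 * ∫ z, g z * (log (g z) - log (h z)) ∂μ) := by
        rw [← sqrt_mul' _ (by norm_num), hF]; ring_nf

lemma sqrt_two_mul_add_le {a e β : ℝ} (he : 0 ≤ e) (hβ : 0 < β) :
    √(2 * (a + e / β ^ 2)) ≤ √2 * √a + 2 / β * √e := by
  have hsqrt2 : √2 ≤ 2 := by rw [sqrt_le_left zero_le_two]; norm_num
  calc √(2 * (a + e / β ^ 2)) ≤ √(2 * a) + √(2 * (e / β ^ 2)) := by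
        rw [mul_add]; exact sqrt_add_le_sqrt_add_sqrt (by positivity)
    _ = √2 * √a + √2 * (√e / β) := by
        rw [sqrt_mul zero_le_two, sqrt_mul zero_le_two, sqrt_div he, sqrt_sq hβ.le]
    _ ≤ √2 * √a + 2 / β * √e := by
        rw [div_mul_eq_mul_div, mul_div_assoc']
        gcongr

noncomputable def gibbsDensity {Z : Type*} [MeasurableSpace Z] (phat : Measure Z) {d : ℕ}
    (φ : Z → Fin d → ℝ) (lam : Fin d → ℝ) (z : Z) : ℝ :=
  exp (dotd lam (φ z) - LamZ phat φ lam)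

section Gibbs

variable {Z : Type*} [MeasurableSpace Z] {d : ℕ} {φ : Z → Fin d → ℝ} {C : ℝ}

lemma abs_dotd_le (lam : Fin d → ℝ) {v : Fin d → ℝ} (hv : ∀ i, |v i| ≤ C) :
    |dotd lam v| ≤ ∑ i, |lam i| * C :=
  (Finset.abs_sum_le_sum_abs _ _).trans <| Finset.sum_le_sum fun i _ => by
    rw [abs_mul]; exact mul_le_mul_of_nonneg_left (hv i) (abs_nonneg _)

lemma measurable_dotd_comp (hφm : Measurable φ) (lam : Fin d → ℝ) :
    Measurable fun z => dotd lam (φ z) := by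
  unfold dotd; fun_prop

lemma measurable_gibbsDensity (phat : Measure Z) (hφm : Measurable φ) (lam : Fin d → ℝ) :
    Measurable (gibbsDensity phat φ lam) :=
  ((measurable_dotd_comp hφm lam).sub_const _).exp

lemma log_gibbsDensity (phat : Measure Z) (lam : Fin d → ℝ) (z : Z) :
    log (gibbsDensity phat φ lam z) = dotd lam (φ z) - LamZ phat φ lam :=
  log_exp _

variable {μ : Measure Z} [IsFiniteMeasure μ]

lemma integrable_dotd_comp (hφm : Measurable φ) (hφb : ∀ z i, |φ z i| ≤ C)
    (lam : Fin d → ℝ) : Integrable (fun z => dotd lam (φ z)) μ :=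
  .of_bound (measurable_dotd_comp hφm lam).aestronglyMeasurable _
    (ae_of_all _ fun z => abs_dotd_le lam (hφb z))

lemma integrable_log_gibbsDensity (phat : Measure Z) (hφm : Measurable φ)
    (hφb : ∀ z i, |φ z i| ≤ C) (lam : Fin d → ℝ) :
    Integrable (fun z => log (gibbsDensity phat φ lam z)) μ := by
  simp only [log_gibbsDensity]
  exact (integrable_dotd_comp hφm hφb lam).sub (integrable_const _)

lemma integral_dotd_comp (hφm : Measurable φ) (hφb : ∀ z i, |φ z i| ≤ C)
    (lam : Fin d → ℝ) : ∫ z, dotd lam (φ z) ∂μ = dotd lam (fun i => ∫ z, φ z i ∂μ) := by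
  have hφi : ∀ i, Integrable (fun z => φ z i) μ := fun i =>
    .of_bound ((measurable_pi_apply i).comp hφm).aestronglyMeasurable C
      (ae_of_all _ fun z => hφb z i)
  unfold dotd
  rw [integral_finsetSum _ fun i _ => (hφi i).const_mul _]
  simp only [integral_const_mul]

lemma integrable_exp_dotd_comp (hφm : Measurable φ) (hφb : ∀ z i, |φ z i| ≤ C)
    (lam : Fin d → ℝ) : Integrable (fun z => exp (dotd lam (φ z))) μ :=
  .of_bound (measurable_dotd_comp hφm lam).exp.aestronglyMeasurable (exp (∑ i, |lam i| * C))
    (ae_of_all _ fun z => by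
      rw [norm_of_nonneg (exp_pos _).le]
      exact exp_le_exp.2 (le_of_abs_le (abs_dotd_le lam (hφb z))))

lemma integrable_gibbsDensity (phat : Measure Z) (hφm : Measurable φ)
    (hφb : ∀ z i, |φ z i| ≤ C) (lam : Fin d → ℝ) : Integrable (gibbsDensity phat φ lam) μ := by
  have h := (integrable_exp_dotd_comp (μ := μ) hφm hφb lam).div_const (exp (LamZ phat φ lam))
  simp only [← exp_sub] at h
  exact h

lemma integral_gibbsDensity (phat : Measure Z) [IsProbabilityMeasure phat]
    (hφm : Measurable φ) (hφb : ∀ z i, |φ z i| ≤ C) (lam : Fin d → ℝ) :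
    ∫ z, gibbsDensity phat φ lam z ∂phat = 1 := by
  have hpos := integral_exp_pos (integrable_exp_dotd_comp (μ := phat) hφm hφb lam)
  simp only [gibbsDensity, exp_sub, LamZ, exp_log hpos, integral_div]
  exact div_self hpos.ne'

end Gibbs

lemma Dreg_zero {Z : Type*} [MeasurableSpace Z] (phat : Measure Z) [IsProbabilityMeasure phat]
    {d : ℕ} (φ : Z → Fin d → ℝ) (β : ℝ) (b : Fin d → ℝ) : Dreg phat φ β b 0 = 0 := by
  simp [Dreg, LamZ, dotd]

lemma Dreg_le {Z : Type*} [MeasurableSpace Z] (phat : Measure Z) {d : ℕ}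
    (φ : Z → Fin d → ℝ) {β : ℝ} (hβ : 0 < β) (b c lam : Fin d → ℝ) :
    Dreg phat φ β b lam ≤ dotd lam c - LamZ phat φ lam + (∑ i, (c i - b i) ^ 2) / β ^ 2 := by
  have key : dotd lam b - dotd lam c - β ^ 2 / 4 * ∑ i, lam i ^ 2 ≤
      (∑ i, (c i - b i) ^ 2) / β ^ 2 := by
    simp only [dotd, ← Finset.sum_sub_distrib, Finset.mul_sum, Finset.sum_div]
    refine Finset.sum_le_sum fun i _ => ?_
    rw [le_div_iff₀ (by positivity)]
    nlinarith [sq_nonneg (β ^ 2 * lam i - 2 * (b i - c i))]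
  unfold Dreg
  linarith

lemma integral_toReal_rnDeriv_mul_log_sub {Z : Type*} [MeasurableSpace Z] {p q : Measure Z}
    [SigmaFinite p] [SigmaFinite q] (hac : p ≪ q)
    (hKL : Integrable (fun z => log (p.rnDeriv q z).toReal) p) {f : Z → ℝ}
    (hf : Integrable f p) :
    ∫ z, (p.rnDeriv q z).toReal * (log (p.rnDeriv q z).toReal - f z) ∂q =
      KLm p q - ∫ z, f z ∂p := by
  rw [integral_toReal_rnDeriv_mul hac, integral_sub hKL hf, KLm]

lemma integral_rnDeriv_mul_log_sub_log_gibbsDensity_le {Z : Type*} [MeasurableSpace Z]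
    (phat : Measure Z) [IsProbabilityMeasure phat] {d : ℕ} {φ : Z → Fin d → ℝ}
    (hφm : Measurable φ) {C : ℝ} (hφb : ∀ z i, |φ z i| ≤ C)
    (p : Measure Z) [IsProbabilityMeasure p] (hac : p ≪ phat)
    (hKL : Integrable (fun z => log (p.rnDeriv phat z).toReal) p)
    {β : ℝ} (hβ : 0 < β) (b lamStar : Fin d → ℝ)
    (hmax : ∀ lam, Dreg phat φ β b lam ≤ Dreg phat φ β b lamStar) :
    ∫ z, (p.rnDeriv phat z).toReal *
        (log (p.rnDeriv phat z).toReal - log (gibbsDensity phat φ lamStar z)) ∂phat ≤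
      KLm p phat + (∑ i, ((∫ z, φ z i ∂p) - b i) ^ 2) / β ^ 2 := by
  have hdual := (Dreg_zero phat φ β b ▸ hmax 0).trans
    (Dreg_le phat φ hβ b (fun i => ∫ z, φ z i ∂p) lamStar)
  rw [integral_toReal_rnDeriv_mul_log_sub hac hKL
    (integrable_log_gibbsDensity phat hφm hφb lamStar)]
  simp only [log_gibbsDensity]
  rw [integral_sub (integrable_dotd_comp hφm hφb lamStar) (integrable_const _),
    integral_dotd_comp hφm hφb, integral_const, probReal_univ, one_smul]
  linarith

theorem stmt10 {Z : Type*} [MeasurableSpace Z] (phat : Measure Z) [IsProbabilityMeasure phat]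
    {d : ℕ} (φ : Z → Fin d → ℝ) (hφm : Measurable φ)
    (C : ℝ) (hφb : ∀ z i, |φ z i| ≤ C)
    (p : Measure Z) [IsProbabilityMeasure p] (hac : p ≪ phat)
    (g : Z → ℝ) (hg : g = fun z => (p.rnDeriv phat z).toReal)
    (hKLfin : Integrable (fun z => Real.log ((p.rnDeriv phat z).toReal)) p)
    (β : ℝ) (hβ : 0 < β) (b : Fin d → ℝ) (lamStar : Fin d → ℝ)
    (hmax : ∀ lam, Dreg phat φ β b lam ≤ Dreg phat φ β b lamStar) :
    ∫ z, |g z - Real.exp (dotd lamStar (φ z) - LamZ phat φ lamStar)| ∂phat ≤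
      Real.sqrt 2 * Real.sqrt (KLm p phat) +
        (2 / β) * Real.sqrt (∑ i, ((∫ z, φ z i ∂p) - b i) ^ 2) := by
  subst hg
  have hlog_int := integrable_log_gibbsDensity (μ := p) phat hφm hφb lamStar
  have hpinsker := integral_abs_sub_le_sqrt_two_mul
    (Measure.measurable_rnDeriv p phat).ennreal_toReal (measurable_gibbsDensity phat hφm lamStar)
    (fun _ => ENNReal.toReal_nonneg) (fun _ => exp_pos _) Measure.integrable_toReal_rnDeriv
    (integrable_gibbsDensity phat hφm hφb lamStar) (by simp [Measure.integral_toReal_rnDeriv hac])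
    (integral_gibbsDensity phat hφm hφb lamStar)
    ((integrable_toReal_rnDeriv_mul_iff hac).2 (hKLfin.sub hlog_int))
  calc _ ≤ _ := hpinsker
    _ ≤ √(2 * (KLm p phat + (∑ i, ((∫ z, φ z i ∂p) - b i) ^ 2) / β ^ 2)) :=
        sqrt_le_sqrt (by
          gcongr
          exact integral_rnDeriv_mul_log_sub_log_gibbsDensity_le phat hφm hφb p hac hKLfin hβ b
            lamStar hmax)
    _ ≤ _ := sqrt_two_mul_add_le (by positivity) hβ
end
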